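/- Fix λ ∈ ℂ \ {0}, α ∈ ℂ, ρ ∈ ℝ, and set Δ(z,ζ,w) = 1 + 2iαz − α²z² − (α²ζ − αᾱ + iρ)w. Define z' = λ·(z + iαz² + (iαζ − iᾱ)w)/Δ, ζ' = (λ/λ̄)·(ζ + 2iᾱz − (αᾱ + iρ)z² + (ᾱ² − iρζ − αᾱζ)w)/Δ, w' = λλ̄·w/Δ. This map fixes the origin of ℂ³, and for every (z,ζ,w) ∈ ℂ³ with |ζ| < 1, Δ(z,ζ,w) ≠ 0, |ζ'| < 1, and Re w = m(z,ζ), one has Re w' = m(z',ζ'). That is, the 5-real-parameter family of maps preserves the Gaussier–Merker hypersurface {Re w = m(z,ζ)} where defined. -/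

import Mathlib

open ComplexConjugate

/-- The Gaussier–Merker graphing function `m(z,ζ)`, `ℂ`-valued
(it is real-valued on `{|ζ| < 1}`). -/
noncomputable def GMm (z ζ : ℂ) : ℂ :=
  (z * conj z + (1 / 2 : ℂ) * (conj z) ^ 2 * ζ + (1 / 2 : ℂ) * z ^ 2 * conj ζ) /
    (1 - ζ * conj ζ)

/-- The common denominator `Δ = 1 + 2iαz − α²z² − (α²ζ − αᾱ + iρ)w`. -/
noncomputable def Δ (α : ℂ) (ρ : ℝ) (z ζ w : ℂ) : ℂ :=
  1 + 2 * Complex.I * α * z - α ^ 2 * z ^ 2 - (α ^ 2 * ζ - α * conj α + Complex.I * ρ) * w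

/-- `z' = λ·(z + iαz² + (iαζ − iᾱ)w)/Δ`. -/
noncomputable def mapZ (lam α : ℂ) (ρ : ℝ) (z ζ w : ℂ) : ℂ :=
  lam * (z + Complex.I * α * z ^ 2 + (Complex.I * α * ζ - Complex.I * conj α) * w) / Δ α ρ z ζ w

/-- `ζ' = (λ/λ̄)·(ζ + 2iᾱz − (αᾱ + iρ)z² + (ᾱ² − iρζ − αᾱζ)w)/Δ`. -/
noncomputable def mapZeta (lam α : ℂ) (ρ : ℝ) (z ζ w : ℂ) : ℂ :=
  (lam / conj lam) *
      (ζ + 2 * Complex.I * conj α * z - (α * conj α + Complex.I * ρ) * z ^ 2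
        + ((conj α) ^ 2 - Complex.I * ρ * ζ - α * conj α * ζ) * w) / Δ α ρ z ζ w

/-- `w' = λλ̄·w/Δ`. -/
noncomputable def mapW (lam α : ℂ) (ρ : ℝ) (z ζ w : ℂ) : ℂ :=
  lam * conj lam * w / Δ α ρ z ζ w

/-! The hypersurface `{|ζ| < 1, Re w = m(z,ζ)}` is the zero set of `Q(z,ζ,w; z̄,ζ̄,w̄)`, where
`Q(z,ζ,w; z',ζ',w') = (w + w')(1 − ζζ') − (2zz' + z'²ζ + z²ζ')` is the polarized defining function.
With `a = iα` and `c = iρ` the map reads `(λZ/D, (λ/λ̄)T/D, λλ̄w/D)` for polynomials `D, Z, T` with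
integer coefficients in `(a, ā, c)` and the point, so its conjugate is the same map with
`(a, ā, c, λ, λ̄)` replaced by `(ā, a, −c, λ̄, λ)`. The homogenization of `Q`, evaluated at
`(D, Z, T, w)` and at the conjugate data, equals `D D̄ Q`: this is a polynomial identity, valid
with `a` and `ā` independent. Together with the `(λ, λ̄)`-homogeneity of `Q` this gives
`Q(Φ p; Φ̄ p̄) = λλ̄/(D D̄) · Q(p; p̄)`. -/

section Polynomial

variable {R : Type*} [CommRing R]

def gmDen (a b c z t w : R) : R := 1 + 2 * a * z + a ^ 2 * z ^ 2 + (a ^ 2 * t + a * b - c) * w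

def gmNumZ (a b z t w : R) : R := z + a * z ^ 2 + (a * t + b) * w

def gmNumZeta (a b c z t w : R) : R :=
  t - 2 * b * z - (a * b + c) * z ^ 2 - (b ^ 2 + (a * b + c) * t) * w

def gmPolar (z t w z' t' w' : R) : R :=
  (w + w') * (1 - t * t') - (2 * z * z' + z' ^ 2 * t + z ^ 2 * t')

def gmPolarHom (s z t w s' z' t' w' : R) : R :=
  (w * s' + w' * s) * (s * s' - t * t') - (2 * s * s' * z * z' + s * z' ^ 2 * t + s' * z ^ 2 * t')

theorem gmPolarHom_gmDen_gmNum (a b c z t w z' t' w' : R) :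
    gmPolarHom (gmDen a b c z t w) (gmNumZ a b z t w) (gmNumZeta a b c z t w) w
        (gmDen b a (-c) z' t' w') (gmNumZ b a z' t' w') (gmNumZeta b a (-c) z' t' w') w' =
      gmDen a b c z t w * gmDen b a (-c) z' t' w' * gmPolar z t w z' t' w' := by
  unfold gmDen gmNumZ gmNumZeta gmPolar gmPolarHom
  ring

theorem map_gmDen {S : Type*} [CommRing S] (f : R →+* S) (a b c z t w : R) :
    f (gmDen a b c z t w) = gmDen (f a) (f b) (f c) (f z) (f t) (f w) := by
  simp only [gmDen, map_add, map_sub, map_mul, map_pow, map_one, map_ofNat]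

end Polynomial

section Field

variable {K : Type*} [Field K]

def gmMapZ (a b c l z t w : K) : K := l * (gmNumZ a b z t w / gmDen a b c z t w)

def gmMapZeta (a b c l l' z t w : K) : K := l / l' * (gmNumZeta a b c z t w / gmDen a b c z t w)

def gmMapW (a b c l l' z t w : K) : K := l * l' * (w / gmDen a b c z t w)

theorem gmPolar_smul {l l' : K} (hl : l ≠ 0) (hl' : l' ≠ 0) (z t w z' t' w' : K) :
    gmPolar (l * z) (l / l' * t) (l * l' * w) (l' * z') (l' / l * t') (l' * l * w') =
      l * l' * gmPolar z t w z' t' w' := by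
  unfold gmPolar
  field_simp

theorem gmPolar_div {s s' : K} (hs : s ≠ 0) (hs' : s' ≠ 0) (z t w z' t' w' : K) :
    gmPolar (z / s) (t / s) (w / s) (z' / s') (t' / s') (w' / s') =
      gmPolarHom s z t w s' z' t' w' / (s * s') ^ 2 := by
  unfold gmPolar gmPolarHom
  field_simp

theorem gmPolar_gmMap {a b c l l' z t w z' t' w' : K} (hl : l ≠ 0) (hl' : l' ≠ 0)
    (hD : gmDen a b c z t w ≠ 0) (hD' : gmDen b a (-c) z' t' w' ≠ 0) :
    gmPolar (gmMapZ a b c l z t w) (gmMapZeta a b c l l' z t w) (gmMapW a b c l l' z t w)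
        (gmMapZ b a (-c) l' z' t' w') (gmMapZeta b a (-c) l' l z' t' w')
        (gmMapW b a (-c) l' l z' t' w') =
      l * l' / (gmDen a b c z t w * gmDen b a (-c) z' t' w') * gmPolar z t w z' t' w' := by
  rw [gmMapZ, gmMapZeta, gmMapW, gmMapZ, gmMapZeta, gmMapW, gmPolar_smul hl hl',
    gmPolar_div hD hD', gmPolarHom_gmDen_gmNum]
  field_simp

variable {L : Type*} [Field L] (f : K →+* L)

theorem map_gmMapZ (a b c l z t w : K) :
    f (gmMapZ a b c l z t w) = gmMapZ (f a) (f b) (f c) (f l) (f z) (f t) (f w) := by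
  simp only [gmMapZ, gmNumZ, map_div₀, map_gmDen, map_add, map_mul, map_pow]

theorem map_gmMapZeta (a b c l l' z t w : K) :
    f (gmMapZeta a b c l l' z t w) =
      gmMapZeta (f a) (f b) (f c) (f l) (f l') (f z) (f t) (f w) := by
  simp only [gmMapZeta, gmNumZeta, map_div₀, map_gmDen, map_add, map_sub, map_mul, map_pow,
    map_ofNat]

theorem map_gmMapW (a b c l l' z t w : K) :
    f (gmMapW a b c l l' z t w) = gmMapW (f a) (f b) (f c) (f l) (f l') (f z) (f t) (f w) := by
  simp only [gmMapW, map_div₀, map_gmDen, map_mul]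

end Field

theorem one_sub_mul_conj_ne_zero {t : ℂ} (ht : ‖t‖ < 1) : 1 - t * conj t ≠ 0 := by
  rw [Complex.mul_conj, Complex.normSq_eq_norm_sq, sub_ne_zero]
  norm_cast
  nlinarith [norm_nonneg t]

theorem conj_GMm (z t : ℂ) : conj (GMm z t) = GMm z t := by
  simp only [GMm, map_div₀, map_add, map_sub, map_mul, map_pow, map_one, map_ofNat,
    Complex.conj_conj]
  ring

theorem gmPolar_conj {t : ℂ} (ht : 1 - t * conj t ≠ 0) (z w : ℂ) :
    gmPolar z t w (conj z) (conj t) (conj w) =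
      (1 - t * conj t) * (2 * ((w.re - (GMm z t).re : ℝ) : ℂ)) := by
  have hm : ((GMm z t).re : ℂ) = GMm z t := Complex.conj_eq_iff_re.mp (conj_GMm z t)
  rw [Complex.ofReal_sub, hm, Complex.re_eq_add_conj]
  unfold gmPolar GMm
  field_simp

theorem re_eq_re_GMm_iff {t : ℂ} (ht : ‖t‖ < 1) (z w : ℂ) :
    w.re = (GMm z t).re ↔ gmPolar z t w (conj z) (conj t) (conj w) = 0 := by
  rw [gmPolar_conj (one_sub_mul_conj_ne_zero ht), mul_eq_zero,
    or_iff_right (one_sub_mul_conj_ne_zero ht), mul_eq_zero, or_iff_right two_ne_zero,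
    Complex.ofReal_eq_zero, sub_eq_zero]

theorem gmMap_re_eq_re_GMm {a c l z t w : ℂ} (hc : conj c = -c) (hl : l ≠ 0)
    (hD : gmDen a (conj a) c z t w ≠ 0) (ht : ‖t‖ < 1)
    (ht' : ‖gmMapZeta a (conj a) c l (conj l) z t w‖ < 1) (h : w.re = (GMm z t).re) :
    (gmMapW a (conj a) c l (conj l) z t w).re =
      (GMm (gmMapZ a (conj a) c l z t w) (gmMapZeta a (conj a) c l (conj l) z t w)).re := by
  have hD' : gmDen (conj a) a (-c) (conj z) (conj t) (conj w) ≠ 0 := by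
    simpa only [map_gmDen, Complex.conj_conj, hc] using (map_ne_zero (starRingEnd ℂ)).mpr hD
  rw [re_eq_re_GMm_iff ht] at h
  rw [re_eq_re_GMm_iff ht', map_gmMapZ, map_gmMapZeta, map_gmMapW]
  simp only [Complex.conj_conj, hc]
  rw [gmPolar_gmMap hl ((map_ne_zero _).mpr hl) hD hD', h, mul_zero]

theorem conj_I_mul (x : ℂ) : conj (Complex.I * x) = -(Complex.I * conj x) := by
  simp

theorem Δ_eq_gmDen (α : ℂ) (ρ : ℝ) (z ζ w : ℂ) :
    Δ α ρ z ζ w = gmDen (Complex.I * α) (conj (Complex.I * α)) (Complex.I * ρ) z ζ w := by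
  rw [conj_I_mul, Δ, gmDen]
  linear_combination (α * conj α * w - α ^ 2 * z ^ 2 - α ^ 2 * ζ * w) * Complex.I_sq

theorem mapZ_eq_gmMapZ (lam α : ℂ) (ρ : ℝ) (z ζ w : ℂ) :
    mapZ lam α ρ z ζ w =
      gmMapZ (Complex.I * α) (conj (Complex.I * α)) (Complex.I * ρ) lam z ζ w := by
  rw [mapZ, Δ_eq_gmDen, gmMapZ, mul_div_assoc, conj_I_mul, gmNumZ]
  ring

theorem mapZeta_eq_gmMapZeta (lam α : ℂ) (ρ : ℝ) (z ζ w : ℂ) :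
    mapZeta lam α ρ z ζ w =
      gmMapZeta (Complex.I * α) (conj (Complex.I * α)) (Complex.I * ρ) lam (conj lam) z ζ w := by
  rw [mapZeta, Δ_eq_gmDen, gmMapZeta, mul_div_assoc, conj_I_mul, gmNumZeta]
  congr 2
  linear_combination ((conj α) ^ 2 * w - α * conj α * z ^ 2 - α * conj α * ζ * w) * Complex.I_sq

theorem mapW_eq_gmMapW (lam α : ℂ) (ρ : ℝ) (z ζ w : ℂ) :
    mapW lam α ρ z ζ w =
      gmMapW (Complex.I * α) (conj (Complex.I * α)) (Complex.I * ρ) lam (conj lam) z ζ w := by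
  rw [mapW, Δ_eq_gmDen, gmMapW, mul_div_assoc]

/-- The 5-real-parameter family of maps `(z,ζ,w) ↦ (z',ζ',w')` fixes the origin of `ℂ³` and
preserves the Gaussier–Merker hypersurface `{Re w = m(z,ζ)}` where defined. -/
theorem gaussierMerker_automorphisms (lam α : ℂ) (ρ : ℝ) (hlam : lam ≠ 0) :
    (mapZ lam α ρ 0 0 0 = 0 ∧ mapZeta lam α ρ 0 0 0 = 0 ∧ mapW lam α ρ 0 0 0 = 0) ∧
    ∀ z ζ w : ℂ, ‖ζ‖ < 1 → Δ α ρ z ζ w ≠ 0 →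
      ‖mapZeta lam α ρ z ζ w‖ < 1 →
      w.re = (GMm z ζ).re →
      (mapW lam α ρ z ζ w).re = (GMm (mapZ lam α ρ z ζ w) (mapZeta lam α ρ z ζ w)).re := by
  refine ⟨by simp [mapZ, mapZeta, mapW], fun z ζ w hζ hΔ hζ' hw => ?_⟩
  rw [Δ_eq_gmDen] at hΔ
  rw [mapZeta_eq_gmMapZeta] at hζ' ⊢
  rw [mapZ_eq_gmMapZ, mapW_eq_gmMapW]
  exact gmMap_re_eq_re_GMm (by simp) hlam hΔ hζ hζ' hw
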